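/- arXiv:math/0306155 — 4 statements merged into one kernel-verified Lean document; each statement's English description precedes it below -/
import Mathlib

section
/- For every natural number m ≥ 1, every real q ∈ [0,1) and every real ε ∈ (0,2), one has ∑_{k ∈ {0,…,m}, k ≥ m·(q+ε)} (m choose k)·q^k·(1−q)^(m−k) ≤ (6/ε)·exp(−m·ε²/4). -/
/-- One-sided exponential tail bound for the binomial distribution, as in the
proof of the paper's large-deviation lemma: for `m ≥ 1`, `q ∈ [0,1)` and
`ε ∈ (0,2)`, the upper binomial tail beyond `m·(q+ε)` is at most
`(6/ε)·exp(-m·ε²/4)`. -/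
theorem binomial_upper_tail (m : ℕ) (hm : 1 ≤ m) (q ε : ℝ)
    (hq0 : 0 ≤ q) (hq1 : q < 1) (hε0 : 0 < ε) (hε2 : ε < 2) :
    ∑ k ∈ (Finset.range (m + 1)).filter (fun k : ℕ => (m : ℝ) * (q + ε) ≤ (k : ℝ)),
        (m.choose k : ℝ) * q ^ k * (1 - q) ^ (m - k)
      ≤ (6 / ε) * Real.exp (-(m : ℝ) * ε ^ 2 / 4) := by
  set t : ℝ := ε / 2 with htdef
  have ht0 : 0 < t := by positivity
  have ht1 : t ≤ 1 := by rw [htdef]; linarith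
  set M : ℝ := (m : ℝ) * (q + ε) with hM
  -- exp t ≤ 1 + t + t^2
  have hexp : Real.exp t ≤ 1 + t + t ^ 2 := by
    have h := Real.exp_bound' ht0.le ht1 (n := 3) (by norm_num)
    have hsum : (∑ i ∈ Finset.range 3, t ^ i / i.factorial) = 1 + t + t ^ 2 / 2 := by
      simp [Finset.sum_range_succ, Nat.factorial]
    rw [hsum] at h
    norm_num [Nat.factorial] at h
    have ht3 : t ^ 3 ≤ t ^ 2 := pow_le_pow_of_le_one ht0.le ht1 (by norm_num)
    nlinarith [h]
  have hq1' : 0 ≤ 1 - q := by linarith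
  have hbase0 : 0 ≤ q * Real.exp t + (1 - q) := by positivity
  have hbase : q * Real.exp t + (1 - q) ≤ Real.exp (q * (t + t ^ 2)) := by
    have h1 : q * Real.exp t + (1 - q) ≤ 1 + q * (t + t ^ 2) := by nlinarith
    have h2 : q * (t + t ^ 2) + 1 ≤ Real.exp (q * (t + t ^ 2)) := Real.add_one_le_exp _
    linarith
  have hnn : ∀ k, 0 ≤ (m.choose k : ℝ) * q ^ k * (1 - q) ^ (m - k) := fun k => by positivity
  calc ∑ k ∈ (Finset.range (m + 1)).filter (fun k : ℕ => (m : ℝ) * (q + ε) ≤ (k : ℝ)),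
        (m.choose k : ℝ) * q ^ k * (1 - q) ^ (m - k)
      ≤ ∑ k ∈ (Finset.range (m + 1)).filter (fun k : ℕ => (m : ℝ) * (q + ε) ≤ (k : ℝ)),
        (m.choose k : ℝ) * q ^ k * (1 - q) ^ (m - k) * Real.exp (t * ((k : ℝ) - M)) := by
        refine Finset.sum_le_sum fun k hk => ?_
        have hkM : M ≤ (k : ℝ) := (Finset.mem_filter.mp hk).2
        exact le_mul_of_one_le_right (hnn k)
          (Real.one_le_exp (by nlinarith))
    _ ≤ ∑ k ∈ Finset.range (m + 1),
        (m.choose k : ℝ) * q ^ k * (1 - q) ^ (m - k) * Real.exp (t * ((k : ℝ) - M)) := by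
        refine Finset.sum_le_sum_of_subset_of_nonneg (Finset.filter_subset _ _) fun k _ _ => ?_
        have := hnn k; positivity
    _ = Real.exp (-(t * M)) *
        ∑ k ∈ Finset.range (m + 1),
          (q * Real.exp t) ^ k * (1 - q) ^ (m - k) * (m.choose k : ℝ) := by
        rw [Finset.mul_sum]
        refine Finset.sum_congr rfl fun k _ => ?_
        rw [mul_pow, ← Real.exp_nat_mul,
          show t * ((k : ℝ) - M) = (k : ℝ) * t + -(t * M) by ring, Real.exp_add]
        ring
    _ = Real.exp (-(t * M)) * (q * Real.exp t + (1 - q)) ^ m := by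
        rw [add_pow]
    _ ≤ Real.exp (-(t * M)) * Real.exp (q * (t + t ^ 2)) ^ m := by
        gcongr
    _ = Real.exp (-(t * M) + (m : ℝ) * (q * (t + t ^ 2))) := by
        rw [← Real.exp_nat_mul, ← Real.exp_add]
    _ ≤ Real.exp (-(m : ℝ) * ε ^ 2 / 4) := by
        apply Real.exp_le_exp.mpr
        have hm1 : (1 : ℝ) ≤ (m : ℝ) := by exact_mod_cast hm
        rw [hM, htdef]
        have hm0 : (0 : ℝ) ≤ (m : ℝ) := by positivity
        nlinarith [mul_nonneg (mul_nonneg hq1' (sq_nonneg ε)) hm0]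
    _ ≤ (6 / ε) * Real.exp (-(m : ℝ) * ε ^ 2 / 4) := by
        have : (1 : ℝ) ≤ 6 / ε := by
          rw [le_div_iff₀ hε0]; linarith
        nlinarith [Real.exp_pos (-(m : ℝ) * ε ^ 2 / 4)]
end

section
/- Let p ∈ [0,1] be real and let u : ℕ × ℕ → ℝ be a function with nonnegative values such that: u(m,0) ≤ 1 for every m; u(0,r) = 0 for every r ≥ 1; and u(m,r) ≤ (1−p)·u(m−1,r) + p·u(m−1,r−1) for all m ≥ 1 and r ≥ 1. Then for all m and r, u(m,r) ≤ ∑_{k=r}^{m} (m choose k)·p^k·(1−p)^(m−k). -/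
private lemma shift_sum_rlbt (g : ℕ → ℝ) (r m : ℕ) :
    ∑ k ∈ Finset.Icc (r+1) (m+1), g k = ∑ k ∈ Finset.Icc r m, g (k+1) := by
  rw [show Finset.Icc (r+1) (m+1) = (Finset.Icc r m).map (addRightEmbedding 1) by
    rw [Finset.map_add_right_Icc], Finset.sum_map]
  rfl

private lemma tail_rec_rlbt (p : ℝ) (m r : ℕ) :
    ∑ k ∈ Finset.Icc (r+1) (m+1), ((m+1).choose k : ℝ) * p ^ k * (1 - p) ^ (m + 1 - k)
    = (1 - p) * ∑ k ∈ Finset.Icc (r+1) m, (m.choose k : ℝ) * p ^ k * (1 - p) ^ (m - k)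
      + p * ∑ k ∈ Finset.Icc r m, (m.choose k : ℝ) * p ^ k * (1 - p) ^ (m - k) := by
  by_cases hrm : r ≤ m
  · rw [shift_sum_rlbt]
    have e1 : ∀ k ∈ Finset.Icc r m,
        ((m+1).choose (k+1) : ℝ) * p ^ (k+1) * (1 - p) ^ (m + 1 - (k+1))
        = (m.choose k : ℝ) * p ^ (k+1) * (1 - p) ^ (m - k)
          + (m.choose (k+1) : ℝ) * p ^ (k+1) * (1 - p) ^ (m - k) := by
      intro k _
      rw [Nat.succ_sub_succ, Nat.choose_succ_succ]
      push_cast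
      ring
    rw [Finset.sum_congr rfl e1, Finset.sum_add_distrib]
    have e2 : ∑ k ∈ Finset.Icc r m, (m.choose (k+1) : ℝ) * p ^ (k+1) * (1 - p) ^ (m - k)
        = (1 - p) * ∑ k ∈ Finset.Icc (r+1) m, (m.choose k : ℝ) * p ^ k * (1 - p) ^ (m - k) := by
      have e3 : ∑ k ∈ Finset.Icc r m, (m.choose (k+1) : ℝ) * p ^ (k+1) * (1 - p) ^ (m - k)
          = ∑ j ∈ Finset.Icc (r+1) (m+1), (m.choose j : ℝ) * p ^ j * (1 - p) ^ (m + 1 - j) := by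
        rw [shift_sum_rlbt (fun j => (m.choose j : ℝ) * p ^ j * (1 - p) ^ (m + 1 - j))]
        exact Finset.sum_congr rfl fun k _ => by rw [Nat.succ_sub_succ]
      rw [e3, Finset.sum_Icc_succ_top (by omega : r + 1 ≤ m + 1),
        Nat.choose_succ_self]
      simp only [Nat.cast_zero, zero_mul]
      rw [add_zero, Finset.mul_sum]
      refine Finset.sum_congr rfl fun j hj => ?_
      have hj' : j ≤ m := (Finset.mem_Icc.mp hj).2
      rw [show m + 1 - j = (m - j) + 1 by omega, pow_succ]
      ring
    rw [e2, Finset.mul_sum]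
    simp only [Finset.mul_sum]
    rw [add_comm]
    congr 1
    exact Finset.sum_congr rfl fun k _ => by ring
  · rw [Finset.Icc_eq_empty (by omega : ¬ r + 1 ≤ m + 1),
      Finset.Icc_eq_empty (by omega : ¬ r + 1 ≤ m),
      Finset.Icc_eq_empty (by omega : ¬ r ≤ m)]
    simp

private lemma icc_tail_zero_rlbt (p : ℝ) (m : ℕ) :
    ∑ k ∈ Finset.Icc 0 m, (m.choose k : ℝ) * p ^ k * (1 - p) ^ (m - k) = 1 := by
  have h : Finset.Icc 0 m = Finset.range (m+1) := by
    ext x; simp [Nat.lt_succ_iff]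
  have key : ∑ k ∈ Finset.Icc 0 m, (m.choose k : ℝ) * p ^ k * (1 - p) ^ (m - k)
      = (p + (1 - p)) ^ m := by
    rw [h, add_pow]
    exact Finset.sum_congr rfl fun k _ => by ring
  rw [key]; simp

/-- The abstract two-variable recursion behind the paper's Lemma `bino`:
a nonnegative function `u` with `u(m,0) ≤ 1`, `u(0,r) = 0` for `r ≥ 1`, and
satisfying the recursion `u(m,r) ≤ (1-p)·u(m-1,r) + p·u(m-1,r-1)` is dominated
by the binomial upper tail. -/
theorem recursion_le_binomial_tail (p : ℝ) (hp0 : 0 ≤ p) (hp1 : p ≤ 1)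
    (u : ℕ × ℕ → ℝ)
    (hu0 : ∀ m r : ℕ, 0 ≤ u (m, r))
    (h1 : ∀ m : ℕ, u (m, 0) ≤ 1)
    (h2 : ∀ r : ℕ, 1 ≤ r → u (0, r) = 0)
    (h3 : ∀ m r : ℕ, 1 ≤ m → 1 ≤ r →
      u (m, r) ≤ (1 - p) * u (m - 1, r) + p * u (m - 1, r - 1)) :
    ∀ m r : ℕ, u (m, r) ≤ ∑ k ∈ Finset.Icc r m,
      (m.choose k : ℝ) * p ^ k * (1 - p) ^ (m - k) := by
  intro m
  induction m with
  | zero =>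
    intro r
    match r with
    | 0 => simpa using h1 0
    | r + 1 =>
      rw [h2 (r+1) (by omega), Finset.Icc_eq_empty (by omega : ¬ r + 1 ≤ 0)]
      simp
  | succ m ih =>
    intro r
    match r with
    | 0 => rw [icc_tail_zero_rlbt]; exact h1 (m+1)
    | r + 1 =>
      have step := h3 (m+1) (r+1) (by omega) (by omega)
      simp only [Nat.add_sub_cancel] at step
      rw [tail_rec_rlbt]
      refine step.trans (add_le_add ?_ ?_)
      · exact mul_le_mul_of_nonneg_left (ih (r+1)) (by linarith)
      · exact mul_le_mul_of_nonneg_left (ih r) hp0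
end

section
/- Let X ⊆ ℝ be Lebesgue measurable. Suppose that for every x ∈ X there is a sequence (D_n(x))_{n∈ℕ} of nondegenerate compact intervals with x ∈ D_n(x), D_{n+1}(x) ⊆ D_n(x), and diam(D_n(x)) → 0 as n → ∞, and such that for all x₁, x₂ ∈ X and every n, the intervals D_n(x₁) and D_n(x₂) are either equal or disjoint. Let (Q_n)_{n∈ℕ} be Lebesgue measurable subsets of ℝ and set q_n(x) = |Q_n ∩ D_n(x)|/|D_n(x)|, where |·| denotes Lebesgue measure. Let Y be the set of x ∈ X which belong to Q_n for at most finitely many n. If ∑_{n} q_n(x) < ∞ for Lebesgue-almost every x ∈ X, then |Y| = |X|, i.e. the set X \ Y has Lebesgue measure zero. -/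
open MeasureTheory Filter

namespace AvilaMoreiraBC

open Set Metric

/-- For `S : Set ℕ`, infinite iff unbounded. -/
lemma infinite_nat_iff {S : Set ℕ} : S.Infinite ↔ ∀ N, ∃ n, N ≤ n ∧ n ∈ S := by
  constructor
  · intro h N
    obtain ⟨n, hn⟩ := (h.diff (Set.finite_Iio N)).nonempty
    exact ⟨n, not_lt.1 hn.2, hn.1⟩
  · intro h hf
    obtain ⟨b, hb⟩ := hf.bddAbove
    obtain ⟨n, hn, hnS⟩ := h (b + 1)
    exact absurd (hb hnS) (by omega)

variable {X : Set ℝ} {D : ℝ → ℕ → Set ℝ}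

lemma piece_eq (hD_mem : ∀ x ∈ X, ∀ n : ℕ, x ∈ D x n)
    (hD_disj : ∀ x₁ ∈ X, ∀ x₂ ∈ X, ∀ n : ℕ,
      D x₁ n = D x₂ n ∨ Disjoint (D x₁ n) (D x₂ n))
    {x y : ℝ} (hx : x ∈ X) (hy : y ∈ X) {n : ℕ} (h : y ∈ D x n) :
    D y n = D x n := by
  rcases hD_disj y hy x hx n with h' | h'
  · exact h'
  · exact absurd h (Set.disjoint_left.mp h' (hD_mem y hy n))

lemma pieces_countable
    (hD_int : ∀ x ∈ X, ∀ n : ℕ, ∃ a b : ℝ, a < b ∧ D x n = Set.Icc a b)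
    (hD_disj : ∀ x₁ ∈ X, ∀ x₂ ∈ X, ∀ n : ℕ,
      D x₁ n = D x₂ n ∨ Disjoint (D x₁ n) (D x₂ n))
    (n : ℕ) : ((fun x => D x n) '' X).Countable := by
  have h1 : ((fun x => D x n) '' X).PairwiseDisjoint id := by
    rintro _ ⟨x₁, hx₁, rfl⟩ _ ⟨x₂, hx₂, rfl⟩ hne
    rcases hD_disj x₁ hx₁ x₂ hx₂ n with h | h
    · exact absurd h hne
    · exact h
  refine h1.countable_of_nonempty_interior ?_
  rintro _ ⟨x, hx, rfl⟩
  obtain ⟨a, b, hab, hD⟩ := hD_int x hx n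
  simp only [id, hD, interior_Icc]
  exact Set.nonempty_Ioo.2 hab

lemma measurable_piecePred (hX : MeasurableSet X)
    (hD_int : ∀ x ∈ X, ∀ n : ℕ, ∃ a b : ℝ, a < b ∧ D x n = Set.Icc a b)
    (hD_mem : ∀ x ∈ X, ∀ n : ℕ, x ∈ D x n)
    (hD_disj : ∀ x₁ ∈ X, ∀ x₂ ∈ X, ∀ n : ℕ,
      D x₁ n = D x₂ n ∨ Disjoint (D x₁ n) (D x₂ n))
    (n : ℕ) (p : Set ℝ → Prop) :
    MeasurableSet {y | y ∈ X ∧ p (D y n)} := by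
  have key : {y | y ∈ X ∧ p (D y n)}
      = ⋃ s ∈ {s | s ∈ (fun x => D x n) '' X ∧ p s}, X ∩ s := by
    ext y
    constructor
    · rintro ⟨hyX, hp⟩
      exact Set.mem_biUnion ⟨⟨y, hyX, rfl⟩, hp⟩ ⟨hyX, hD_mem y hyX n⟩
    · intro hy
      simp only [Set.mem_iUnion] at hy
      obtain ⟨s, ⟨⟨x, hxX, rfl⟩, hp⟩, hyX, hys⟩ := hy
      exact ⟨hyX, by rwa [piece_eq hD_mem hD_disj hxX hyX hys]⟩
  rw [key]
  refine MeasurableSet.biUnion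
    ((pieces_countable hD_int hD_disj n).mono (fun s hs => hs.1)) ?_
  rintro s ⟨⟨x, hxX, rfl⟩, _⟩
  obtain ⟨a, b, hab, hD⟩ := hD_int x hxX n
  rw [show (fun x => D x n) x = Set.Icc a b from hD]
  exact hX.inter measurableSet_Icc

open scoped Classical

/-- The relative density of `Q k` in the level-`k` interval of `y`, extended by
`0` outside `X`. -/
noncomputable def gg (X : Set ℝ) (D : ℝ → ℕ → Set ℝ) (Q : ℕ → Set ℝ) (k : ℕ)
    (y : ℝ) : ℝ :=
  if y ∈ X then (volume (Q k ∩ D y k)).toReal / (volume (D y k)).toReal else 0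

lemma gg_nonneg (X : Set ℝ) (D : ℝ → ℕ → Set ℝ) (Q : ℕ → Set ℝ) (k : ℕ)
    (y : ℝ) : 0 ≤ gg X D Q k y := by
  unfold gg
  split
  · positivity
  · exact le_rfl

lemma measurable_gg (hX : MeasurableSet X)
    (hD_int : ∀ x ∈ X, ∀ n : ℕ, ∃ a b : ℝ, a < b ∧ D x n = Set.Icc a b)
    (hD_mem : ∀ x ∈ X, ∀ n : ℕ, x ∈ D x n)
    (hD_disj : ∀ x₁ ∈ X, ∀ x₂ ∈ X, ∀ n : ℕ,
      D x₁ n = D x₂ n ∨ Disjoint (D x₁ n) (D x₂ n))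
    (Q : ℕ → Set ℝ) (k : ℕ) : Measurable (gg X D Q k) := by
  apply measurable_of_Iio
  intro c
  have key : gg X D Q k ⁻¹' Set.Iio c =
      {y | y ∈ X ∧ ((volume (Q k ∩ D y k)).toReal / (volume (D y k)).toReal < c)}
        ∪ {y | y ∉ X ∧ (0:ℝ) < c} := by
    ext y
    by_cases hy : y ∈ X <;> simp [gg, hy]
  rw [key]
  apply (measurable_piecePred hX hD_int hD_mem hD_disj k
    (fun s => (volume (Q k ∩ s)).toReal / (volume s).toReal < c)).union
  by_cases h0 : (0:ℝ) < c
  · have he : {y : ℝ | y ∉ X ∧ (0:ℝ) < c} = Xᶜ := by ext y; simp [h0]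
    rw [he]; exact hX.compl
  · have he : {y : ℝ | y ∉ X ∧ (0:ℝ) < c} = ∅ := by ext y; simp [h0]
    rw [he]; exact MeasurableSet.empty

/-- The per-level estimate: the part of `W ∩ Q k` consisting of points whose
level-`k` interval has at least half of its mass in `W` has measure at most
twice the integral of the relative density over `W`. -/
lemma per_level (hX : MeasurableSet X)
    (hD_int : ∀ x ∈ X, ∀ n : ℕ, ∃ a b : ℝ, a < b ∧ D x n = Set.Icc a b)
    (hD_mem : ∀ x ∈ X, ∀ n : ℕ, x ∈ D x n)
    (hD_disj : ∀ x₁ ∈ X, ∀ x₂ ∈ X, ∀ n : ℕ,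
      D x₁ n = D x₂ n ∨ Disjoint (D x₁ n) (D x₂ n))
    (Q : ℕ → Set ℝ) (k : ℕ)
    (W : Set ℝ) (hW : MeasurableSet W) (hWX : W ⊆ X) :
    volume (W ∩ Q k ∩
        {y | y ∈ X ∧ volume (D y k) ≤ 2 * volume (W ∩ D y k)})
      ≤ 2 * ∫⁻ y in W, ENNReal.ofReal (gg X D Q k y) := by
  classical
  set 𝒮 : Set (Set ℝ) := (fun x => D x k) '' X with h𝒮
  have hSc : 𝒮.Countable := pieces_countable hD_int hD_disj k
  haveI hScS : Countable ↥𝒮 := hSc.to_subtype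
  set G : Set ℝ := {y | y ∈ X ∧ volume (D y k) ≤ 2 * volume (W ∩ D y k)}
    with hG
  have hs_icc : ∀ s ∈ 𝒮, ∃ a b : ℝ, a < b ∧ s = Set.Icc a b := by
    rintro s ⟨x, hxX, rfl⟩; exact hD_int x hxX k
  have hs_meas : ∀ s ∈ 𝒮, MeasurableSet s := by
    intro s hs
    obtain ⟨a, b, _, rfl⟩ := hs_icc s hs
    exact measurableSet_Icc
  have hpiece : ∀ s ∈ 𝒮, ∀ y ∈ X, y ∈ s → D y k = s := by
    rintro s ⟨x, hxX, rfl⟩ y hyX hys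
    exact piece_eq hD_mem hD_disj hxX hyX hys
  -- covering
  have hcover : W ∩ Q k ∩ G ⊆ ⋃ s ∈ 𝒮, (W ∩ Q k ∩ G ∩ s) := by
    intro y hy
    have hyX : y ∈ X := hWX hy.1.1
    exact Set.mem_biUnion ⟨y, hyX, rfl⟩ ⟨hy, hD_mem y hyX k⟩
  -- per piece bound
  have per : ∀ s ∈ 𝒮,
      volume (W ∩ Q k ∩ G ∩ s)
        ≤ 2 * ∫⁻ y in W ∩ s, ENNReal.ofReal (gg X D Q k y) := by
    intro s hs
    rcases Set.eq_empty_or_nonempty (W ∩ Q k ∩ G ∩ s) with he | ⟨y₀, hy₀⟩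
    · simp [he]
    have hy₀X : y₀ ∈ X := hWX hy₀.1.1.1
    have hy₀s : D y₀ k = s := hpiece s hs y₀ hy₀X hy₀.2
    obtain ⟨a, b, hab, hIcc⟩ := hs_icc s hs
    have hsvol_pos : volume s ≠ 0 := by
      rw [hIcc, Real.volume_Icc]
      simp only [ne_eq, ENNReal.ofReal_eq_zero, not_le]
      linarith
    have hsvol_fin : volume s ≠ ⊤ := by
      rw [hIcc, Real.volume_Icc]; exact ENNReal.ofReal_ne_top
    have hgood : volume s ≤ 2 * volume (W ∩ s) := by
      have h := hy₀.1.2.2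
      rwa [hy₀s] at h
    set qv : ℝ := (volume (Q k ∩ s)).toReal / (volume s).toReal with hqv
    have hq_eq : ∀ y ∈ W ∩ s, gg X D Q k y = qv := by
      intro y hy
      have hyX : y ∈ X := hWX hy.1
      have hDs : D y k = s := hpiece s hs y hyX hy.2
      simp [gg, hyX, hDs, hqv]
    have hQs_fin : volume (Q k ∩ s) ≠ ⊤ :=
      ((measure_mono Set.inter_subset_right).trans_lt
        (lt_top_iff_ne_top.2 hsvol_fin)).ne
    have hqv0 : (0:ℝ) ≤ qv := by rw [hqv]; positivity
    have hBne : (volume s).toReal ≠ 0 :=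
      ENNReal.toReal_ne_zero.2 ⟨hsvol_pos, hsvol_fin⟩
    have hQs : volume (Q k ∩ s) = ENNReal.ofReal qv * volume s := by
      conv_lhs => rw [← ENNReal.ofReal_toReal hQs_fin]
      conv_rhs => rw [← ENNReal.ofReal_toReal hsvol_fin]
      rw [← ENNReal.ofReal_mul hqv0, hqv, div_mul_cancel₀ _ hBne]
    calc volume (W ∩ Q k ∩ G ∩ s)
        ≤ volume (Q k ∩ s) := measure_mono (fun y hy => ⟨hy.1.1.2, hy.2⟩)
      _ = ENNReal.ofReal qv * volume s := hQs
      _ ≤ ENNReal.ofReal qv * (2 * volume (W ∩ s)) := by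
          exact mul_le_mul_right hgood _
      _ = 2 * (ENNReal.ofReal qv * volume (W ∩ s)) := by ring
      _ = 2 * ∫⁻ y in W ∩ s, ENNReal.ofReal (gg X D Q k y) := by
          have hcongr : ∫⁻ y in W ∩ s, ENNReal.ofReal (gg X D Q k y)
              = ∫⁻ _ in W ∩ s, ENNReal.ofReal qv := by
            apply setLIntegral_congr_fun (hW.inter (hs_meas s hs))
            show ∀ y ∈ W ∩ s, ENNReal.ofReal (gg X D Q k y) = ENNReal.ofReal qv
            intro y hy
            rw [hq_eq y hy]
          rw [hcongr, setLIntegral_const, mul_comm (ENNReal.ofReal qv)]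
  -- disjointness of the pieces
  have hdisj : Pairwise (Function.onFun Disjoint fun s : ↥𝒮 => W ∩ ↑s) := by
    intro s t hst
    have hsv : (s : Set ℝ) ≠ (t : Set ℝ) := fun h => hst (Subtype.ext h)
    obtain ⟨x₁, hx₁, h₁⟩ := s.2
    obtain ⟨x₂, hx₂, h₂⟩ := t.2
    have : Disjoint (s : Set ℝ) (t : Set ℝ) := by
      rcases hD_disj x₁ hx₁ x₂ hx₂ k with h | h
      · exact absurd (h₁ ▸ h₂ ▸ h) hsv
      · exact h₁ ▸ h₂ ▸ h
    exact (this.mono Set.inter_subset_right Set.inter_subset_right)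
  have hUnion : ⋃ s : ↥𝒮, (W ∩ ↑s) = W := by
    apply Set.Subset.antisymm
    · exact Set.iUnion_subset (fun s => Set.inter_subset_left)
    · intro y hy
      have hyX : y ∈ X := hWX hy
      exact Set.mem_iUnion.2 ⟨⟨D y k, ⟨y, hyX, rfl⟩⟩, hy, hD_mem y hyX k⟩
  calc volume (W ∩ Q k ∩ G)
      ≤ ∑' s : ↥𝒮, volume (W ∩ Q k ∩ G ∩ ↑s) :=
        (measure_mono hcover).trans (measure_biUnion_le volume hSc _)
    _ ≤ ∑' s : ↥𝒮, 2 * ∫⁻ y in W ∩ ↑s, ENNReal.ofReal (gg X D Q k y) :=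
        ENNReal.tsum_le_tsum (fun s : ↥𝒮 => per s.1 s.2)
    _ = 2 * ∑' s : ↥𝒮, ∫⁻ y in W ∩ ↑s, ENNReal.ofReal (gg X D Q k y) :=
        ENNReal.tsum_mul_left
    _ = 2 * ∫⁻ y in ⋃ s : ↥𝒮, (W ∩ ↑s), ENNReal.ofReal (gg X D Q k y) := by
        rw [lintegral_iUnion (fun s : ↥𝒮 => hW.inter (hs_meas s.1 s.2)) hdisj]
    _ = 2 * ∫⁻ y in W, ENNReal.ofReal (gg X D Q k y) := by rw [hUnion]

/-- The key vanishing lemma. -/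
lemma key_vanish (hX : MeasurableSet X)
    (hD_int : ∀ x ∈ X, ∀ n : ℕ, ∃ a b : ℝ, a < b ∧ D x n = Set.Icc a b)
    (hD_mem : ∀ x ∈ X, ∀ n : ℕ, x ∈ D x n)
    (hD_diam : ∀ x ∈ X,
      Tendsto (fun n : ℕ => Metric.diam (D x n)) atTop (nhds 0))
    (hD_disj : ∀ x₁ ∈ X, ∀ x₂ ∈ X, ∀ n : ℕ,
      D x₁ n = D x₂ n ∨ Disjoint (D x₁ n) (D x₂ n))
    (Q : ℕ → Set ℝ) (hQ : ∀ n, MeasurableSet (Q n)) (m : ℕ)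
    (W : Set ℝ) (hW : MeasurableSet W) (hWX : W ⊆ X) (hWfin : volume W ≠ ⊤)
    (hWio : ∀ y ∈ W, {n : ℕ | y ∈ Q n}.Infinite)
    (hWtail : ∀ y ∈ W, ∀ F : Finset ℕ, ∑ n ∈ F, gg X D Q (n + m) y ≤ 1) :
    volume W = 0 := by
  classical
  set G : ℕ → Set ℝ := fun k =>
    {y | y ∈ X ∧ volume (D y k) ≤ 2 * volume (W ∩ D y k)} with hGdef
  have hGmeas : ∀ k, MeasurableSet (G k) := fun k =>
    measurable_piecePred hX hD_int hD_mem hD_disj k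
      (fun s => volume s ≤ 2 * volume (W ∩ s))
  set A : ℕ → Set ℝ := fun n => W ∩ Q (n + m) ∩ G (n + m) with hAdef
  have hAmeas : ∀ n, MeasurableSet (A n) :=
    fun n => (hW.inter (hQ (n + m))).inter (hGmeas (n + m))
  -- Claim 2 : the measures of the `A n` are summable.
  have claim2 : ∑' n, volume (A n) ≤ 2 * volume W := by
    have hmeasof : ∀ n : ℕ,
        AEMeasurable (fun y => ENNReal.ofReal (gg X D Q (n + m) y))
          (volume.restrict W) :=
      fun n => ((measurable_gg hX hD_int hD_mem hD_disj Q (n + m)).ennreal_ofReal).aemeasurable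
    calc ∑' n, volume (A n)
        ≤ ∑' n, 2 * ∫⁻ y in W, ENNReal.ofReal (gg X D Q (n + m) y) :=
          ENNReal.tsum_le_tsum (fun n =>
            per_level hX hD_int hD_mem hD_disj Q (n + m) W hW hWX)
      _ = 2 * ∑' n, ∫⁻ y in W, ENNReal.ofReal (gg X D Q (n + m) y) :=
          ENNReal.tsum_mul_left
      _ = 2 * ∫⁻ y in W, ∑' n, ENNReal.ofReal (gg X D Q (n + m) y) := by
          rw [← lintegral_tsum hmeasof]
      _ ≤ 2 * ∫⁻ _ in W, 1 := by
          gcongr 2 * ?_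
          apply lintegral_mono_ae
          filter_upwards [ae_restrict_mem hW] with y hy
          rw [ENNReal.tsum_eq_iSup_sum]
          apply iSup_le
          intro F
          rw [← ENNReal.ofReal_sum_of_nonneg (fun n _ => gg_nonneg X D Q (n + m) y)]
          calc ENNReal.ofReal (∑ n ∈ F, gg X D Q (n + m) y)
              ≤ ENNReal.ofReal 1 := ENNReal.ofReal_le_ofReal (hWtail y hy F)
            _ = 1 := ENNReal.ofReal_one
      _ = 2 * volume W := by rw [setLIntegral_one]
  -- hence the set of points in infinitely many `A n` is null.
  have hfreq : volume {y | ∃ᶠ n in atTop, y ∈ A n} = 0 := by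
    apply measure_setOf_frequently_eq_zero
    refine ne_of_lt (lt_of_le_of_lt claim2 ?_)
    exact ENNReal.mul_lt_top (by norm_num) (lt_top_iff_ne_top.2 hWfin)
  -- Claim 1 : a.e. point of `W` lies in infinitely many `A n`.
  have hdens := Besicovitch.ae_tendsto_measure_inter_div volume W
  have claim1 : ∀ᵐ y ∂volume, y ∈ W → ∃ᶠ n in atTop, y ∈ A n := by
    have hdens' : ∀ᵐ y ∂volume, y ∈ W →
        Tendsto (fun r => volume (W ∩ closedBall y r) / volume (closedBall y r))
          (nhdsWithin 0 (Set.Ioi 0)) (nhds 1) := (ae_restrict_iff' hW).1 hdens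
    filter_upwards [hdens'] with y hy hyW
    have hyX : y ∈ X := hWX hyW
    -- radii
    set r : ℕ → ℝ := fun n => Metric.diam (D y n) with hrdef
    have hIcc : ∀ n, ∃ a b : ℝ, a < b ∧ D y n = Set.Icc a b := hD_int y hyX
    have hr_pos : ∀ n, 0 < r n := by
      intro n
      obtain ⟨a, b, hab, hD⟩ := hIcc n
      rw [hrdef]
      simp only [hD, Real.diam_Icc hab.le]
      linarith
    have hvolD : ∀ n, volume (D y n) = ENNReal.ofReal (r n) := by
      intro n
      obtain ⟨a, b, hab, hD⟩ := hIcc n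
      rw [hrdef]
      simp only [hD, Real.volume_Icc, Real.diam_Icc hab.le]
    have hsub : ∀ n, D y n ⊆ closedBall y (r n) := by
      intro n z hz
      obtain ⟨a, b, hab, hD⟩ := hIcc n
      rw [mem_closedBall]
      exact Metric.dist_le_diam_of_mem (by rw [hD]; exact isBounded_Icc a b)
        hz (hD_mem y hyX n)
    have hrt : Tendsto r atTop (nhdsWithin 0 (Set.Ioi 0)) := by
      apply tendsto_nhdsWithin_of_tendsto_nhds_of_eventually_within
      · exact hD_diam y hyX
      · exact Filter.Eventually.of_forall (fun n => hr_pos n)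
    have htend : Tendsto
        (fun n => volume (W ∩ closedBall y (r n)) / volume (closedBall y (r n)))
        atTop (nhds 1) := (hy hyW).comp hrt
    have hev : ∀ᶠ n in atTop,
        ENNReal.ofReal (3/4) <
          volume (W ∩ closedBall y (r n)) / volume (closedBall y (r n)) := by
      apply htend.eventually_const_lt
      rw [show (1 : ENNReal) = ENNReal.ofReal 1 by simp]
      exact ENNReal.ofReal_lt_ofReal_iff_of_nonneg (by norm_num) |>.2 (by norm_num)
    have hevG : ∀ᶠ n in atTop, y ∈ G n := by
      filter_upwards [hev] with n hn
      refine ⟨hyX, ?_⟩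
      set B := closedBall y (r n)
      have hBvol : volume B = ENNReal.ofReal (2 * r n) := Real.volume_closedBall y (r n)
      have hB0 : volume B ≠ 0 := by
        rw [hBvol]
        simp only [ne_eq, ENNReal.ofReal_eq_zero, not_le]
        linarith [hr_pos n]
      have hBt : volume B ≠ ⊤ := by rw [hBvol]; exact ENNReal.ofReal_ne_top
      -- from the ratio bound
      have h1 : ENNReal.ofReal (3/2 * r n) ≤ volume (W ∩ B) := by
        have := mul_le_mul_left hn.le (volume B)
        rw [ENNReal.div_mul_cancel hB0 hBt] at this
        calc ENNReal.ofReal (3/2 * r n)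
            = ENNReal.ofReal (3/4) * ENNReal.ofReal (2 * r n) := by
              rw [← ENNReal.ofReal_mul (by norm_num)]; ring_nf
          _ = ENNReal.ofReal (3/4) * volume B := by rw [hBvol]
          _ ≤ volume (W ∩ B) := this
      have h2 : W ∩ B ⊆ (W ∩ D y n) ∪ (B \ D y n) := by
        intro z hz
        by_cases hzD : z ∈ D y n
        · exact Or.inl ⟨hz.1, hzD⟩
        · exact Or.inr ⟨hz.2, hzD⟩
      have hDmeas : MeasurableSet (D y n) := by
        obtain ⟨a, b, _, hD⟩ := hIcc n
        rw [hD]; exact measurableSet_Icc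
      have h3 : volume (B \ D y n) = ENNReal.ofReal (r n) := by
        rw [measure_diff (hsub n) hDmeas.nullMeasurableSet
          (by rw [hvolD n]; exact ENNReal.ofReal_ne_top), hBvol, hvolD n,
          ← ENNReal.ofReal_sub _ (hr_pos n).le]
        ring_nf
      have h4 : ENNReal.ofReal (3/2 * r n) ≤ volume (W ∩ D y n) + ENNReal.ofReal (r n) := by
        calc ENNReal.ofReal (3/2 * r n) ≤ volume (W ∩ B) := h1
          _ ≤ volume ((W ∩ D y n) ∪ (B \ D y n)) := measure_mono h2
          _ ≤ volume (W ∩ D y n) + volume (B \ D y n) := measure_union_le _ _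
          _ = volume (W ∩ D y n) + ENNReal.ofReal (r n) := by rw [h3]
      have h5 : ENNReal.ofReal (3/2 * r n)
          = ENNReal.ofReal (1/2 * r n) + ENNReal.ofReal (r n) := by
        rw [← ENNReal.ofReal_add (by positivity) (hr_pos n).le]
        ring_nf
      have h6 : ENNReal.ofReal (1/2 * r n) ≤ volume (W ∩ D y n) := by
        rw [h5] at h4
        exact (ENNReal.add_le_add_iff_right ENNReal.ofReal_ne_top).1 h4
      calc volume (D y n) = ENNReal.ofReal (r n) := hvolD n
        _ = 2 * ENNReal.ofReal (1/2 * r n) := by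
            rw [show (2 : ENNReal) = ENNReal.ofReal 2 by simp,
              ← ENNReal.ofReal_mul (by norm_num)]
            ring_nf
        _ ≤ 2 * volume (W ∩ D y n) := mul_le_mul_right h6 _
    -- now combine with the infinitely-often property
    obtain ⟨n₀, hn₀⟩ := eventually_atTop.1 hevG
    rw [frequently_atTop]
    intro N
    obtain ⟨k, hk, hkQ⟩ := infinite_nat_iff.1 (hWio y hyW) (N + m + n₀)
    refine ⟨k - m, by omega, ?_⟩
    have hkm : k - m + m = k := by omega
    show y ∈ W ∩ Q (k - m + m) ∩ G (k - m + m)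
    rw [hkm]
    exact ⟨⟨hyW, hkQ⟩, hn₀ k (by omega)⟩
  -- conclude
  set E : Set ℝ := {y | ∃ᶠ n in atTop, y ∈ A n} with hEdef
  have hnull : volume (W \ E) = 0 := by
    have : ∀ᵐ y ∂volume, ¬(y ∈ W \ E) := by
      filter_upwards [claim1] with y hy
      intro hcon
      exact hcon.2 (hy hcon.1)
    have h := ae_iff.1 this
    simp only [not_not] at h
    exact h
  refine le_antisymm ?_ (zero_le)
  calc volume W ≤ volume ((W \ E) ∪ E) := measure_mono (fun y hy => by
        by_cases hyE : y ∈ E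
        · exact Or.inr hyE
        · exact Or.inl ⟨hy, hyE⟩)
    _ ≤ volume (W \ E) + volume E := measure_union_le _ _
    _ = 0 := by rw [hnull, hfreq, add_zero]

end AvilaMoreiraBC

/-- The Borel–Cantelli-type lemma (Lemma 3.1 of Avila–Moreira): if to each point
`x` of a measurable set `X ⊆ ℝ` is associated a nested sequence of nondegenerate
compact intervals `D_n(x)` shrinking to `x`, with the intervals of a given level
equal or disjoint, and if the relative densities `q_n(x)` of measurable sets
`Q_n` in `D_n(x)` are almost surely summable, then almost every `x ∈ X` belongs
to only finitely many `Q_n`. -/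
theorem borel_cantelli_nested_intervals (X : Set ℝ) (hX : MeasurableSet X)
    (D : ℝ → ℕ → Set ℝ)
    (hD_int : ∀ x ∈ X, ∀ n : ℕ, ∃ a b : ℝ, a < b ∧ D x n = Set.Icc a b)
    (hD_mem : ∀ x ∈ X, ∀ n : ℕ, x ∈ D x n)
    (hD_nested : ∀ x ∈ X, ∀ n : ℕ, D x (n + 1) ⊆ D x n)
    (hD_diam : ∀ x ∈ X,
      Tendsto (fun n : ℕ => Metric.diam (D x n)) atTop (nhds 0))
    (hD_disj : ∀ x₁ ∈ X, ∀ x₂ ∈ X, ∀ n : ℕ,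
      D x₁ n = D x₂ n ∨ Disjoint (D x₁ n) (D x₂ n))
    (Q : ℕ → Set ℝ) (hQ : ∀ n, MeasurableSet (Q n))
    (hsum : ∀ᵐ x ∂(volume.restrict X),
      Summable (fun n : ℕ =>
        (volume (Q n ∩ D x n)).toReal / (volume (D x n)).toReal)) :
    volume (X \ {x ∈ X | {n : ℕ | x ∈ Q n}.Finite}) = 0 := by
  classical
  open AvilaMoreiraBC in
  -- rewrite the target set
  have hset : X \ {x ∈ X | {n : ℕ | x ∈ Q n}.Finite}
      = {x | x ∈ X ∧ {n : ℕ | x ∈ Q n}.Infinite} := by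
    ext x
    by_cases hx : x ∈ X <;> simp [hx, Set.mem_diff]
  rw [hset]
  -- the null set where summability fails
  have hsum' : ∀ᵐ x ∂volume, x ∈ X → Summable (fun n : ℕ =>
      (volume (Q n ∩ D x n)).toReal / (volume (D x n)).toReal) :=
    (ae_restrict_iff' hX).1 hsum
  have hns : volume {x | x ∈ X ∧ ¬ Summable (fun n : ℕ =>
      (volume (Q n ∩ D x n)).toReal / (volume (D x n)).toReal)} = 0 := by
    have := ae_iff.1 hsum'
    simpa [Classical.not_imp] using this
  -- the sets Z m R
  set q : ℝ → ℕ → ℝ := fun x n =>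
    (volume (Q n ∩ D x n)).toReal / (volume (D x n)).toReal with hq
  set Z : ℕ → ℕ → Set ℝ := fun m R =>
    ({x | x ∈ X ∧ {n : ℕ | x ∈ Q n}.Infinite}
      ∩ ⋂ F : Finset ℕ, {x | ∑ n ∈ F, AvilaMoreiraBC.gg X D Q (n + m) x ≤ 1})
      ∩ Set.Icc (-(R:ℝ)) R with hZ
  -- measurability of the "infinitely often" set
  have hiomeas : MeasurableSet {x : ℝ | {n : ℕ | x ∈ Q n}.Infinite} := by
    have : {x : ℝ | {n : ℕ | x ∈ Q n}.Infinite}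
        = ⋂ N : ℕ, ⋃ n : ℕ, ⋃ _ : N ≤ n, Q n := by
      ext x
      simp only [Set.mem_setOf_eq, Set.mem_iInter, Set.mem_iUnion]
      rw [AvilaMoreiraBC.infinite_nat_iff]
      constructor
      · intro h N; obtain ⟨n, hn, hnQ⟩ := h N; exact ⟨n, hn, hnQ⟩
      · intro h N; obtain ⟨n, hn, hnQ⟩ := h N; exact ⟨n, hn, hnQ⟩
    rw [this]
    exact MeasurableSet.iInter (fun N => MeasurableSet.iUnion (fun n =>
      MeasurableSet.iUnion (fun _ => hQ n)))
  -- each Z m R is null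
  have hZ0 : ∀ m R, volume (Z m R) = 0 := by
    intro m R
    have hZmeas : MeasurableSet (Z m R) := by
      apply MeasurableSet.inter _ measurableSet_Icc
      apply MeasurableSet.inter (hX.inter hiomeas)
      apply MeasurableSet.iInter
      intro F
      have : Measurable (fun x => ∑ n ∈ F, AvilaMoreiraBC.gg X D Q (n + m) x) :=
        Finset.measurable_sum F (fun n _ =>
          AvilaMoreiraBC.measurable_gg hX hD_int hD_mem hD_disj Q (n + m))
      exact measurableSet_le this measurable_const
    apply AvilaMoreiraBC.key_vanish hX hD_int hD_mem hD_diam hD_disj Q hQ m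
      (Z m R) hZmeas
    · intro y hy; exact hy.1.1.1
    · exact ((measure_mono (Set.inter_subset_right)).trans_lt
        measure_Icc_lt_top).ne
    · intro y hy; exact hy.1.1.2
    · intro y hy F
      have := hy.1.2
      simp only [Set.mem_iInter, Set.mem_setOf_eq] at this
      exact this F
  -- covering
  have hcover : {x | x ∈ X ∧ {n : ℕ | x ∈ Q n}.Infinite}
      ⊆ {x | x ∈ X ∧ ¬ Summable (fun n : ℕ =>
          (volume (Q n ∩ D x n)).toReal / (volume (D x n)).toReal)}
        ∪ ⋃ m : ℕ, ⋃ R : ℕ, Z m R := by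
    intro x hx
    by_cases hsx : Summable (fun n : ℕ =>
        (volume (Q n ∩ D x n)).toReal / (volume (D x n)).toReal)
    · right
      set f : ℕ → ℝ := fun n =>
        (volume (Q n ∩ D x n)).toReal / (volume (D x n)).toReal with hf
      have hf_nonneg : ∀ n, 0 ≤ f n := by intro n; rw [hf]; positivity
      -- find m with small tail
      have htendsto : Tendsto (fun k => ∑ i ∈ Finset.range k, f i) atTop
          (nhds (∑' i, f i)) := hsx.hasSum.tendsto_sum_nat
      have : ∀ᶠ k in atTop, (∑' i, f i) - 1 < ∑ i ∈ Finset.range k, f i :=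
        htendsto.eventually_const_lt (sub_lt_self _ one_pos)
      obtain ⟨m, hm⟩ := this.exists
      have htail : ∑' n, f (n + m) ≤ 1 := by
        have hsum_add := Summable.sum_add_tsum_nat_add m hsx
        linarith
      have hm' : ∀ F : Finset ℕ, ∑ n ∈ F, f (n + m) ≤ 1 := by
        intro F
        calc ∑ n ∈ F, f (n + m)
            ≤ ∑' n, f (n + m) := Summable.sum_le_tsum F (fun n _ => hf_nonneg (n + m))
              ((summable_nat_add_iff m).2 hsx)
          _ ≤ 1 := htail
      obtain ⟨R, hR⟩ := exists_nat_ge |x|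
      refine Set.mem_iUnion.2 ⟨m, Set.mem_iUnion.2 ⟨R, ?_⟩⟩
      refine ⟨⟨hx, ?_⟩, ?_⟩
      · simp only [Set.mem_iInter, Set.mem_setOf_eq]
        intro F
        have hgg : ∀ n, AvilaMoreiraBC.gg X D Q (n + m) x = f (n + m) := by
          intro n
          simp [AvilaMoreiraBC.gg, hx.1, hf]
        rw [Finset.sum_congr rfl (fun n _ => hgg n)]
        exact hm' F
      · rw [Set.mem_Icc]
        constructor <;> [linarith [neg_abs_le x]; linarith [le_abs_self x]]
    · exact Or.inl ⟨hx.1, hsx⟩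
  apply measure_mono_null hcover
  apply measure_union_null hns
  exact measure_iUnion_null (fun m => measure_iUnion_null (fun R => hZ0 m R))
end

section
/- Let (α, μ) be a measurable space with a finite measure μ and let f : α → α be a measurable map preserving μ (i.e. μ(f^{-1}(S)) = μ(S) for every measurable S). Let Λ and B be disjoint measurable subsets of α. For x ∈ α let τ_Λ(x) = inf{k ≥ 1 : f^k(x) ∈ Λ} ∈ ℕ ∪ {∞} (with inf ∅ = ∞) and define τ_B analogously. Let Λ̂ = {x : τ_Λ(x) ≤ τ_B(x)}, Λ_l = Λ̂ \ B and Λ_r = Λ̂ ∩ B. Then f^{-1}(Λ_l ∪ Λ) = Λ_l ∪ Λ_r, and if moreover Λ_l ∩ Λ = ∅, then μ(Λ) = μ(Λ_r). -/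
open MeasureTheory

/-- The first hitting time (at time `≥ 1`) of a set `S` under iteration of `f`,
with value `∞` (i.e. `⊤` in `ℕ∞`) if the forward orbit never enters `S`. -/
noncomputable def hittingTime {α : Type*} (f : α → α) (S : Set α) (x : α) : ℕ∞ :=
  sInf {n : ℕ∞ | ∃ k : ℕ, n = (k : ℕ∞) ∧ 1 ≤ k ∧ f^[k] x ∈ S}

/-!
Comparing hitting times obeys a one-step recursion: `τ_Λ x ≤ τ_B x` iff `f x ∈ Λ`, or
`f x ∉ B` and `τ_Λ (f x) ≤ τ_B (f x)`. Read on sets, this says `f⁻¹(Λ̂ \ B ∪ Λ) = Λ̂`, which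
is `Λ_l ∪ Λ_r`. Invariance of `μ` then gives `μ Λ_l + μ Λ = μ Λ_l + μ Λ_r`, and the finite
term `μ Λ_l` cancels. `Λ̂` is measurable because hitting times are measurable maps into the
countable space `ℕ∞`.
-/

section HittingTime

variable {α : Type*} {f : α → α} {S : Set α} {x : α}

theorem one_le_hittingTime : 1 ≤ hittingTime f S x :=
  le_sInf <| by rintro _ ⟨k, rfl, hk, -⟩; exact_mod_cast hk

theorem hittingTime_eq_one_of_mem (h : f x ∈ S) : hittingTime f S x = 1 :=
  le_antisymm (sInf_le ⟨1, by simp, le_rfl, h⟩) one_le_hittingTime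

theorem hittingTime_eq_add_one_of_notMem (h : f x ∉ S) :
    hittingTime f S x = hittingTime f S (f x) + 1 := by
  have hshift : {n : ℕ∞ | ∃ k : ℕ, n = (k : ℕ∞) ∧ 1 ≤ k ∧ f^[k] x ∈ S}
      = (· + 1) '' {n : ℕ∞ | ∃ k : ℕ, n = (k : ℕ∞) ∧ 1 ≤ k ∧ f^[k] (f x) ∈ S} := by
    ext n
    constructor
    · rintro ⟨_ | _ | k, rfl, hk, hkS⟩
      · omega
      · exact absurd hkS h
      · exact ⟨k + 1, ⟨k + 1, rfl, by omega, hkS⟩, by push_cast; rfl⟩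
    · rintro ⟨_, ⟨k, rfl, -, hkS⟩, rfl⟩
      exact ⟨k + 1, by push_cast; rfl, by omega, hkS⟩
  rw [hittingTime, hshift, sInf_image, ← ENat.sInf_add]
  rfl

theorem one_lt_hittingTime_of_notMem (h : f x ∉ S) : 1 < hittingTime f S x := by
  rw [hittingTime_eq_add_one_of_notMem h]
  calc (1 : ℕ∞) < 1 + 1 := by norm_num
    _ ≤ hittingTime f S (f x) + 1 := by gcongr; exact one_le_hittingTime

theorem hittingTime_eq_one_iff : hittingTime f S x = 1 ↔ f x ∈ S := by
  refine ⟨fun h1 => ?_, hittingTime_eq_one_of_mem⟩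
  by_contra h
  exact (one_lt_hittingTime_of_notMem h).ne' h1

theorem hittingTime_eq_natCast_add_two_iff {n : ℕ} :
    hittingTime f S x = (n + 2 : ℕ) ↔ f x ∉ S ∧ hittingTime f S (f x) = (n + 1 : ℕ) := by
  by_cases h : f x ∈ S
  · simp only [hittingTime_eq_one_of_mem h, h, not_true, false_and, iff_false]
    exact_mod_cast (by omega : 1 ≠ n + 2)
  · rw [hittingTime_eq_add_one_of_notMem h, show ((n + 2 : ℕ) : ℕ∞) = (n + 1 : ℕ) + 1 by
      push_cast; ring]
    simp [h]

theorem hittingTime_le_hittingTime_iff {Λ B : Set α} :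
    hittingTime f Λ x ≤ hittingTime f B x ↔
      f x ∈ Λ ∨ f x ∉ B ∧ hittingTime f Λ (f x) ≤ hittingTime f B (f x) := by
  by_cases hΛ : f x ∈ Λ
  · simpa [hittingTime_eq_one_of_mem hΛ, hΛ] using one_le_hittingTime
  by_cases hB : f x ∈ B
  · simpa [hittingTime_eq_one_of_mem hB, hΛ, hB] using one_lt_hittingTime_of_notMem hΛ
  · simp [hittingTime_eq_add_one_of_notMem hΛ, hittingTime_eq_add_one_of_notMem hB, hΛ, hB]

theorem preimage_setOf_hittingTime_le_diff_union {Λ B : Set α} :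
    f ⁻¹' ({x | hittingTime f Λ x ≤ hittingTime f B x} \ B ∪ Λ) =
      {x | hittingTime f Λ x ≤ hittingTime f B x} := by
  ext x
  simp only [Set.mem_preimage, Set.mem_union, Set.mem_sdiff, Set.mem_ofPred_eq]
  rw [hittingTime_le_hittingTime_iff (x := x)]
  tauto

variable [MeasurableSpace α]

theorem measurable_hittingTime (hf : Measurable f) (hS : MeasurableSet S) :
    Measurable (hittingTime f S) := by
  refine ENat.measurable_iff.2 fun n => ?_
  induction n using Nat.twoStepInduction with
  | zero =>
    convert MeasurableSet.empty
    ext x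
    simpa using (zero_lt_one.trans_le one_le_hittingTime).ne'
  | one =>
    convert hf hS
    ext x
    simpa using hittingTime_eq_one_iff
  | more n _ ih =>
    convert (hf hS.compl).inter (hf ih)
    ext x
    simpa using hittingTime_eq_natCast_add_two_iff

theorem measurableSet_setOf_hittingTime_le {Λ B : Set α}
    (hf : Measurable f) (hΛ : MeasurableSet Λ) (hB : MeasurableSet B) :
    MeasurableSet {x | hittingTime f Λ x ≤ hittingTime f B x} :=
  (measurable_hittingTime hf hΛ).prodMk (measurable_hittingTime hf hB)
    (Set.to_countable {p : ℕ∞ × ℕ∞ | p.1 ≤ p.2}).measurableSet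

end HittingTime

theorem hitting_set_identity_general {α : Type*} [MeasurableSpace α]
    (μ : Measure α) [IsFiniteMeasure μ]
    (f : α → α) (hf : Measurable f)
    (hinv : ∀ S : Set α, MeasurableSet S → μ (f ⁻¹' S) = μ S)
    (Λ B : Set α) (hΛ : MeasurableSet Λ) (hB : MeasurableSet B) :
    f ⁻¹' (({x | hittingTime f Λ x ≤ hittingTime f B x} \ B) ∪ Λ)
        = ({x | hittingTime f Λ x ≤ hittingTime f B x} \ B)
          ∪ ({x | hittingTime f Λ x ≤ hittingTime f B x} ∩ B) ∧
      (({x | hittingTime f Λ x ≤ hittingTime f B x} \ B) ∩ Λ = ∅ →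
        μ Λ = μ ({x | hittingTime f Λ x ≤ hittingTime f B x} ∩ B)) := by
  set T := {x | hittingTime f Λ x ≤ hittingTime f B x}
  have hpre : f ⁻¹' (T \ B ∪ Λ) = T := preimage_setOf_hittingTime_le_diff_union
  refine ⟨hpre.trans (Set.sdiff_union_inter T B).symm, fun hTΛ => ?_⟩
  have hT : MeasurableSet T := measurableSet_setOf_hittingTime_le hf hΛ hB
  have hμ : μ (T \ B) + μ Λ = μ (T \ B) + μ (T ∩ B) := by
    rw [← measure_union (Set.disjoint_iff_inter_eq_empty.2 hTΛ) hΛ,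
      ← hinv _ ((hT.diff hB).union hΛ), hpre,
      ← measure_union Set.disjoint_sdiff_inter (hT.inter hB), Set.sdiff_union_inter]
  exact (ENNReal.add_right_inj (measure_ne_top μ _)).1 hμ

/-- The hitting-set identity of Section 6 of the paper: for a measure-preserving
map `f` of a finite measure space and disjoint measurable sets `Λ`, `B`, letting
`Λ̂ = {x : τ_Λ(x) ≤ τ_B(x)}`, `Λ_l = Λ̂ \ B`, `Λ_r = Λ̂ ∩ B`, one has
`f⁻¹(Λ_l ∪ Λ) = Λ_l ∪ Λ_r`, and if moreover `Λ_l ∩ Λ = ∅` then `μ(Λ) = μ(Λ_r)`. -/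
theorem hitting_set_identity {α : Type*} [MeasurableSpace α]
    (μ : Measure α) [IsFiniteMeasure μ]
    (f : α → α) (hf : Measurable f)
    (hinv : ∀ S : Set α, MeasurableSet S → μ (f ⁻¹' S) = μ S)
    (Λ B : Set α) (hΛ : MeasurableSet Λ) (hB : MeasurableSet B)
    (hdisj : Disjoint Λ B) :
    f ⁻¹' (({x | hittingTime f Λ x ≤ hittingTime f B x} \ B) ∪ Λ)
        = ({x | hittingTime f Λ x ≤ hittingTime f B x} \ B)
          ∪ ({x | hittingTime f Λ x ≤ hittingTime f B x} ∩ B) ∧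
      (({x | hittingTime f Λ x ≤ hittingTime f B x} \ B) ∩ Λ = ∅ →
        μ Λ = μ ({x | hittingTime f Λ x ≤ hittingTime f B x} ∩ B)) :=
  hitting_set_identity_general μ f hf hinv Λ B hΛ hB
end
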